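/- Let α = e^{2πi/3} and define 𝔣 : ℂ → ℂ³ by 𝔣(z) = (1/√3)·(e^{z − z̄}, e^{αz − α²z̄}, e^{α²z − αz̄}). Then for all z ∈ ℂ: (i) 𝔣·conj 𝔣 = 1 (𝔣 maps into the unit sphere S⁵); (ii) 𝔣_z·conj 𝔣 = 0 and 𝔣_z̄·conj 𝔣 = 0 (𝔣 is horizontal); (iii) 𝔣_z·conj(𝔣_z) = 1, 𝔣_z̄·conj(𝔣_z̄) = 1 and 𝔣_z·conj(𝔣_z̄) = 0 (𝔣 is conformal with induced metric 2e^{u}dz dz̄, e^{u} = 1); (iv) 𝔣_{zz}·conj(𝔣_z̄) = −1 (the Hopf differential coefficient is ψ = −1). -/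

import Mathlib

open Complex

/-- The standard Hermitian inner product Z·conj W on ℂ³. -/
noncomputable def herm (Z W : Fin 3 → ℂ) : ℂ :=
  ∑ k : Fin 3, Z k * (starRingEnd ℂ) (W k)

/-- Wirtinger derivative ∂_z = ½(∂ₓ − i∂ᵧ). -/
noncomputable def wdz {E : Type*} [NormedAddCommGroup E] [NormedSpace ℂ E]
    (f : ℂ → E) (z : ℂ) : E :=
  (2 : ℂ)⁻¹ • (fderiv ℝ f z 1 - Complex.I • fderiv ℝ f z Complex.I)

/-- Wirtinger derivative ∂_z̄ = ½(∂ₓ + i∂ᵧ). -/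
noncomputable def wdzbar {E : Type*} [NormedAddCommGroup E] [NormedSpace ℂ E]
    (f : ℂ → E) (z : ℂ) : E :=
  (2 : ℂ)⁻¹ • (fderiv ℝ f z 1 + Complex.I • fderiv ℝ f z Complex.I)

noncomputable def alphaConst : ℂ := Complex.exp (2 * Real.pi * Complex.I / 3)

/-- The horizontal lift of the Clifford torus as a map ℂ → ℂ³. -/
noncomputable def cliff (z : ℂ) : Fin 3 → ℂ :=
  ((Real.sqrt 3 : ℂ))⁻¹ •
    ![Complex.exp (z - (starRingEnd ℂ) z),
      Complex.exp (alphaConst * z - alphaConst ^ 2 * (starRingEnd ℂ) z),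
      Complex.exp (alphaConst ^ 2 * z - alphaConst * (starRingEnd ℂ) z)]

/-! Each component of `cliff` is a plane wave `c * exp (a z - conj a * conj z)` of constant modulus
`|c|`, on which `∂_z` acts as multiplication by `a` and `∂_z̄` as multiplication by `-conj a`.
With frequencies `a = α ^ k`, every quantity in the theorem becomes, up to the factor `1/3`, a
Hermitian product of characters `χ_m k = α ^ (m k)` of `ℤ/3`: `𝔣, 𝔣_z, 𝔣_zz, 𝔣_z̄` carry
`χ_0, χ_1, χ_2, -χ_2`, and `⟪χ_m, χ_n⟫ = 3` or `0` according as `m ≡ n (mod 3)` or not. -/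

open ComplexConjugate

section Wirtinger

variable {E : Type*} [NormedAddCommGroup E] [NormedSpace ℂ E]

lemma wdz_comp {g : ℂ → E} {h : ℂ → ℂ} {w : ℂ} (hg : DifferentiableAt ℂ g (h w))
    (hh : DifferentiableAt ℝ h w) : wdz (g ∘ h) w = wdz h w • deriv g (h w) := by
  rw [wdz, wdz, ((hg.hasDerivAt.hasFDerivAt.restrictScalars ℝ).comp w hh.hasFDerivAt).fderiv]
  simp only [ContinuousLinearMap.coe_comp, Function.comp_apply,
    ContinuousLinearMap.coe_restrictScalars', ContinuousLinearMap.toSpanSingleton_apply, smul_smul,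
    ← sub_smul, smul_eq_mul]

lemma wdzbar_comp {g : ℂ → E} {h : ℂ → ℂ} {w : ℂ} (hg : DifferentiableAt ℂ g (h w))
    (hh : DifferentiableAt ℝ h w) : wdzbar (g ∘ h) w = wdzbar h w • deriv g (h w) := by
  rw [wdzbar, wdzbar,
    ((hg.hasDerivAt.hasFDerivAt.restrictScalars ℝ).comp w hh.hasFDerivAt).fderiv]
  simp only [ContinuousLinearMap.coe_comp, Function.comp_apply,
    ContinuousLinearMap.coe_restrictScalars', ContinuousLinearMap.toSpanSingleton_apply, smul_smul,
    ← add_smul, smul_eq_mul]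

lemma hasFDerivAt_mul_sub_mul_conj (a b w : ℂ) :
    HasFDerivAt (fun z : ℂ => a * z - b * conj z)
      (a • ContinuousLinearMap.id ℝ ℂ - b • conjCLE.toContinuousLinearMap) w :=
  ((hasFDerivAt_id w).const_smul a).sub (conjCLE.hasFDerivAt.const_smul b)

lemma wdz_mul_sub_mul_conj (a b w : ℂ) : wdz (fun z : ℂ => a * z - b * conj z) w = a := by
  rw [wdz, (hasFDerivAt_mul_sub_mul_conj a b w).fderiv]
  simp only [sub_apply, smul_apply, ContinuousLinearMap.id_apply, smul_eq_mul, mul_one,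
    ContinuousLinearEquiv.coe_coe, ContinuousAlgEquiv.coeCLE_apply, conjCAE_apply, map_one, conj_I,
    mul_neg, sub_neg_eq_add]
  linear_combination (-(a + b) / 2) * I_sq

lemma wdzbar_mul_sub_mul_conj (a b w : ℂ) :
    wdzbar (fun z : ℂ => a * z - b * conj z) w = -b := by
  rw [wdzbar, (hasFDerivAt_mul_sub_mul_conj a b w).fderiv]
  simp only [sub_apply, smul_apply, ContinuousLinearMap.id_apply, smul_eq_mul, mul_one,
    ContinuousLinearEquiv.coe_coe, ContinuousAlgEquiv.coeCLE_apply, conjCAE_apply, map_one, conj_I,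
    mul_neg, sub_neg_eq_add]
  linear_combination ((a + b) / 2) * I_sq

lemma wdz_pi {ι : Type*} [Fintype ι] {f : ι → ℂ → ℂ} {w : ℂ}
    (hf : ∀ k, DifferentiableAt ℝ (f k) w) :
    wdz (fun z k => f k z) w = fun k => wdz (f k) w := by
  funext k
  simp [wdz, fderiv_pi hf]

lemma wdzbar_pi {ι : Type*} [Fintype ι] {f : ι → ℂ → ℂ} {w : ℂ}
    (hf : ∀ k, DifferentiableAt ℝ (f k) w) :
    wdzbar (fun z k => f k z) w = fun k => wdzbar (f k) w := by
  funext k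
  simp [wdzbar, fderiv_pi hf]

end Wirtinger

noncomputable def planeWave {ι : Type*} (c a : ι → ℂ) (z : ℂ) : ι → ℂ :=
  fun k => c k * exp (a k * z - conj (a k) * conj z)

section PlaneWave

variable {ι : Type*} [Fintype ι] (c a : ι → ℂ)

lemma wdz_planeWave : wdz (planeWave c a) = planeWave (a * c) a := by
  funext w
  unfold planeWave
  rw [wdz_pi fun k => by fun_prop]
  funext k
  rw [← Function.comp_def (fun u => c k * exp u), wdz_comp (by fun_prop) (by fun_prop),
    wdz_mul_sub_mul_conj, ((hasDerivAt_exp _).const_mul (c k)).deriv]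
  simp only [smul_eq_mul, Pi.mul_apply]
  ring

lemma wdzbar_planeWave : wdzbar (planeWave c a) = planeWave (-(star a * c)) a := by
  funext w
  unfold planeWave
  rw [wdzbar_pi fun k => by fun_prop]
  funext k
  rw [← Function.comp_def (fun u => c k * exp u), wdzbar_comp (by fun_prop) (by fun_prop),
    wdzbar_mul_sub_mul_conj, ((hasDerivAt_exp _).const_mul (c k)).deriv]
  simp only [smul_eq_mul, Pi.neg_apply, Pi.mul_apply, Pi.star_apply, RCLike.star_def]
  ring

end PlaneWave

lemma herm_planeWave (p q a : Fin 3 → ℂ) (z : ℂ) :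
    herm (planeWave p a z) (planeWave q a z) = herm p q := by
  refine Finset.sum_congr rfl fun k _ => ?_
  have hunit : exp (a k * z - conj (a k) * conj z) *
      conj (exp (a k * z - conj (a k) * conj z)) = 1 := by
    rw [← exp_conj, ← exp_add]
    simp
  simp only [planeWave, map_mul]
  linear_combination p k * conj (q k) * hunit

lemma herm_smul_smul (s t : ℂ) (u v : Fin 3 → ℂ) :
    herm (s • u) (t • v) = s * conj t * herm u v := by
  simp only [herm, Finset.mul_sum, Pi.smul_apply, smul_eq_mul, map_mul]
  exact Finset.sum_congr rfl fun _ _ => by ring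

lemma herm_neg_left (u v : Fin 3 → ℂ) : herm (-u) v = -herm u v := by
  simp [herm]

lemma herm_neg_right (u v : Fin 3 → ℂ) : herm u (-v) = -herm u v := by
  simp [herm]

lemma isPrimitiveRoot_alphaConst : IsPrimitiveRoot alphaConst 3 := by
  simpa [alphaConst] using isPrimitiveRoot_exp 3 (by norm_num)

lemma conj_alphaConst : conj alphaConst = alphaConst ^ 2 := by
  rw [← inv_eq_conj (isPrimitiveRoot_alphaConst.norm'_eq_one (by norm_num)),
    inv_eq_of_mul_eq_one_right (by rw [← pow_succ', isPrimitiveRoot_alphaConst.pow_eq_one])]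

noncomputable def cubeRootChar (m : ℕ) : Fin 3 → ℂ := fun k => alphaConst ^ (m * (k : ℕ))

lemma cubeRootChar_mul (m n : ℕ) : cubeRootChar m * cubeRootChar n = cubeRootChar (m + n) := by
  funext k
  simp [cubeRootChar, add_mul, pow_add]

lemma star_cubeRootChar (m : ℕ) : star (cubeRootChar m) = cubeRootChar (2 * m) := by
  funext k
  simp [cubeRootChar, conj_alphaConst, ← pow_mul, mul_assoc]

lemma herm_cubeRootChar (m n : ℕ) :
    herm (cubeRootChar m) (cubeRootChar n) = if m % 3 = n % 3 then 3 else 0 := by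
  have hsum : herm (cubeRootChar m) (cubeRootChar n) =
      ∑ k ∈ Finset.range 3, (alphaConst ^ (m + 2 * n)) ^ k := by
    rw [← Fin.sum_univ_eq_sum_range]
    refine Finset.sum_congr rfl fun k _ => ?_
    simp only [cubeRootChar, map_pow, conj_alphaConst, ← pow_mul, ← pow_add]
    ring_nf
  rw [hsum]
  split_ifs with hmn
  · obtain ⟨j, hj⟩ : 3 ∣ m + 2 * n := by omega
    simp [hj, pow_mul, isPrimitiveRoot_alphaConst.pow_eq_one]
  · have hcop : (m + 2 * n).Coprime 3 :=
      (Nat.prime_three.coprime_iff_not_dvd.2 (by omega)).symm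
    exact (isPrimitiveRoot_alphaConst.pow_of_coprime _ hcop).geom_sum_eq_zero (by norm_num)

lemma cliff_eq_planeWave :
    cliff = planeWave (((Real.sqrt 3 : ℂ))⁻¹ • cubeRootChar 0) (cubeRootChar 1) := by
  funext z k
  have hpow4 : alphaConst ^ 4 = alphaConst := by
    rw [pow_succ, isPrimitiveRoot_alphaConst.pow_eq_one, one_mul]
  fin_cases k <;> simp [cliff, planeWave, cubeRootChar, conj_alphaConst, ← pow_mul, hpow4]

/-- The Clifford lift is a flat, conformal, horizontal (Legendrian) map into S⁵
with constant Hopf differential ψ = −1. -/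
theorem cliff_properties (z : ℂ) :
    -- (i) 𝔣 maps into the unit sphere S⁵
    herm (cliff z) (cliff z) = 1 ∧
    -- (ii) 𝔣 is horizontal
    herm (wdz cliff z) (cliff z) = 0 ∧
    herm (wdzbar cliff z) (cliff z) = 0 ∧
    -- (iii) 𝔣 is conformal with e^u = 1
    herm (wdz cliff z) (wdz cliff z) = 1 ∧
    herm (wdzbar cliff z) (wdzbar cliff z) = 1 ∧
    herm (wdz cliff z) (wdzbar cliff z) = 0 ∧
    -- (iv) the Hopf differential coefficient is ψ = −1
    herm (wdz (wdz cliff) z) (wdzbar cliff z) = -1 := by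
  have hs : ((Real.sqrt 3 : ℂ))⁻¹ * conj ((Real.sqrt 3 : ℂ))⁻¹ = 3⁻¹ := by
    rw [map_inv₀, conj_ofReal, ← mul_inv, ← ofReal_mul, Real.mul_self_sqrt (by norm_num)]
    norm_num
  simp only [cliff_eq_planeWave, wdz_planeWave, wdzbar_planeWave, herm_planeWave, mul_smul_comm,
    star_cubeRootChar, cubeRootChar_mul, herm_neg_left, herm_neg_right, herm_smul_smul,
    herm_cubeRootChar, hs]
  norm_num
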